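/- arXiv:1405.6851 — 3 statements merged into one kernel-verified Lean document; each statement's English description precedes it below -/
import Mathlib

section
/- Let U and V be finite sets of real numbers, let k be a real number, and partition U = U⁺ ∪ U⁼ ∪ U⁻ and V = V⁺ ∪ V⁼ ∪ V⁻ according to whether elements are greater than, equal to, or less than k. Suppose |V|·|U⁺| + |U|·|V⁺| ≤ |U|·|V| and |V|·|U⁻| + |U|·|V⁻| ≤ |U|·|V| (the weighted-median property). Then |U⁺|·|V⁺| + |U⁻|·|V⁻| + (1/2)·|U⁼|·|V⁼| ≤ (1/2)·|U|·|V|. -/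
/-!
Write `a, b, c` for `|U⁺|, |U⁼|, |U⁻|`, `p, q, r` for `|V⁺|, |V⁼|, |V⁻|`, and
`A = a + b + c`, `P = p + q + r`. Since `b * q = (A - a - c) * (P - p - r)`, the claim is equivalent to
`3ap + 3cr + ar + cp ≤ X + Y` with `X = P a + A p` and `Y = P c + A r`. The weighted-median
hypotheses say `0 ≤ X, Y ≤ A P`, hence `X² + Y² ≤ A P (X + Y)`, while expanding
`X² + Y² - A P (3ap + 3cr + ar + cp)` gives half a sum of four squares.
-/

open Finset

theorem card_filter_gt_add_card_filter_eq_add_card_filter_lt {α : Type*} [LinearOrder α]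
    (s : Finset α) (k : α) :
    #(s.filter (k < ·)) + #(s.filter (· = k)) + #(s.filter (· < k)) = #s := by
  rw [card_filter, card_filter, card_filter, ← sum_add_distrib, ← sum_add_distrib,
    card_eq_sum_ones]
  refine sum_congr rfl fun x _ => ?_
  rcases lt_trichotomy x k with h | rfl | h
  · simp [h, h.ne, not_lt_of_gt h]
  · simp
  · simp [h, h.ne', not_lt_of_gt h]

theorem mul_add_mul_add_half_mul_le_of_weighted_median {a b c p q r : ℝ}
    (ha : 0 ≤ a) (hb : 0 ≤ b) (hc : 0 ≤ c) (hp : 0 ≤ p) (hq : 0 ≤ q) (hr : 0 ≤ r)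
    (hplus : (p + q + r) * a + (a + b + c) * p ≤ (a + b + c) * (p + q + r))
    (hminus : (p + q + r) * c + (a + b + c) * r ≤ (a + b + c) * (p + q + r)) :
    a * p + c * r + 1 / 2 * b * q ≤ 1 / 2 * (a + b + c) * (p + q + r) := by
  set A := a + b + c
  set P := p + q + r
  set X := P * a + A * p
  set Y := P * c + A * r
  have hX0 : 0 ≤ X := by positivity
  have hY0 : 0 ≤ Y := by positivity
  have hsq : A * P * (3 * a * p + 3 * c * r + a * r + c * p) ≤ X ^ 2 + Y ^ 2 := by
    nlinarith [sq_nonneg (P * a - A * p), sq_nonneg (P * c - A * r), sq_nonneg (P * a - A * r),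
      sq_nonneg (P * c - A * p)]
  have hX : X ^ 2 ≤ A * P * X := by nlinarith [mul_nonneg hX0 (sub_nonneg.2 hplus)]
  have hY : Y ^ 2 ≤ A * P * Y := by nlinarith [mul_nonneg hY0 (sub_nonneg.2 hminus)]
  have hkey : 3 * a * p + 3 * c * r + a * r + c * p ≤ X + Y := by
    rcases (mul_nonneg (by positivity : 0 ≤ A) (by positivity : 0 ≤ P)).eq_or_lt with hN | hN
    · rcases mul_eq_zero.1 hN.symm with hA | hP
      · obtain ⟨rfl, rfl⟩ : a = 0 ∧ c = 0 := ⟨by linarith, by linarith⟩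
        simpa using add_nonneg hX0 hY0
      · obtain ⟨rfl, rfl⟩ : p = 0 ∧ r = 0 := ⟨by linarith, by linarith⟩
        simpa using add_nonneg hX0 hY0
    · exact le_of_mul_le_mul_left (by linarith) hN
  linear_combination (1 / 2) * hkey

theorem measure_decrease_inequality (U V : Finset ℝ) (k : ℝ)
    (hplus : V.card * (U.filter (fun u => k < u)).card +
        U.card * (V.filter (fun v => k < v)).card ≤ U.card * V.card)
    (hminus : V.card * (U.filter (fun u => u < k)).card +
        U.card * (V.filter (fun v => v < k)).card ≤ U.card * V.card) :
    ((U.filter (fun u => k < u)).card : ℝ) * (V.filter (fun v => k < v)).card +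
      ((U.filter (fun u => u < k)).card : ℝ) * (V.filter (fun v => v < k)).card +
      (1/2) * (U.filter (fun u => u = k)).card * (V.filter (fun v => v = k)).card ≤
      (1/2) * U.card * V.card := by
  rw [← card_filter_gt_add_card_filter_eq_add_card_filter_lt U k,
    ← card_filter_gt_add_card_filter_eq_add_card_filter_lt V k] at hplus hminus ⊢
  push_cast
  exact mul_add_mul_add_half_mul_le_of_weighted_median (by positivity) (by positivity)
    (by positivity) (by positivity) (by positivity) (by positivity)
    (mod_cast hplus) (mod_cast hminus)
end

section
/- Let A be a real m×n matrix, b ∈ ℝ^m, c ∈ ℝ^n, and partition {1,...,n} into X₁ and X₂. For assignments φ₁ : X₁ → {0,1} and φ₂ : X₂ → {0,1}, define u(φ₁)_i = Σ_{j∈X₁} A_{ij}φ₁(j), v(φ₂)_i = b_i − Σ_{j∈X₂} A_{ij}φ₂(j), and weights w₁(φ₁) = Σ_{j∈X₁} c_j φ₁(j), w₂(φ₂) = Σ_{j∈X₂} c_j φ₂(j). Then the minimum of c^T x over x ∈ {0,1}^n with Ax = b (when the feasible set is nonempty) equals the minimum of w₁(φ₁) + w₂(φ₂) over pairs (φ₁,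 φ₂) with u(φ₁) = v(φ₂). -/
/-!
Since `X₁, X₂` partition the columns, `c ᵀ x` and every row of `A x` split as an `X₁`-part plus
an `X₂`-part. A feasible `x` therefore yields the pair `(x, x)` with the same weight, and a pair
`(φ₁, φ₂)` with `u(φ₁) = v(φ₂)` glues to the feasible vector equal to `φ₁` on `X₁` and `φ₂` on
`X₂`, again with the same weight. So the two sets of attained values coincide, and so do their
infima.
-/

namespace Finset

variable {ι R : Type*} [Fintype ι] [DecidableEq ι] [NonUnitalNonAssocSemiring R]

theorem sum_mul_piecewise_eq_add_compl (s : Finset ι) (a f g : ι → R) :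
    ∑ j, a j * s.piecewise f g j = ∑ j ∈ s, a j * f j + ∑ j ∈ sᶜ, a j * g j := by
  rw [← sum_add_sum_compl s]
  congr 1 <;> refine sum_congr rfl fun j hj => ?_
  · rw [piecewise_eq_of_mem s f g hj]
  · rw [piecewise_eq_of_notMem s f g (mem_compl.1 hj)]

theorem sum_mul_eq_add_compl (s : Finset ι) (a x : ι → R) :
    ∑ j, a j * x j = ∑ j ∈ s, a j * x j + ∑ j ∈ sᶜ, a j * x j := by
  simpa only [piecewise_same] using sum_mul_piecewise_eq_add_compl s a x x

end Finset

open Finset in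
theorem two_table_optimization_general {m n : ℕ} (A : Matrix (Fin m) (Fin n) ℝ)
    (b : Fin m → ℝ) (c : Fin n → ℝ) (X₁ X₂ : Finset (Fin n))
    (hunion : X₁ ∪ X₂ = Finset.univ) (hdisj : Disjoint X₁ X₂) :
    sInf {y : ℝ | ∃ x : Fin n → ℝ, (∀ j, x j = 0 ∨ x j = 1) ∧ A.mulVec x = b ∧
        y = ∑ j, c j * x j} =
    sInf {y : ℝ | ∃ φ₁ φ₂ : Fin n → ℝ,
        (∀ j, φ₁ j = 0 ∨ φ₁ j = 1) ∧ (∀ j, φ₂ j = 0 ∨ φ₂ j = 1) ∧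
        (∀ i, ∑ j ∈ X₁, A i j * φ₁ j = b i - ∑ j ∈ X₂, A i j * φ₂ j) ∧
        y = (∑ j ∈ X₁, c j * φ₁ j) + ∑ j ∈ X₂, c j * φ₂ j} := by
  obtain rfl : X₁ᶜ = X₂ := (isCompl_iff.2 ⟨hdisj, codisjoint_iff.2 hunion⟩).compl_eq
  congr 1
  ext y
  constructor
  · rintro ⟨x, hx, hAx, rfl⟩
    refine ⟨x, x, hx, hx, fun i => ?_, sum_mul_eq_add_compl X₁ c x⟩
    rw [← congrFun hAx i, Matrix.mulVec, dotProduct, sum_mul_eq_add_compl X₁]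
    ring
  · rintro ⟨φ₁, φ₂, hφ₁, hφ₂, hrow, rfl⟩
    refine ⟨X₁.piecewise φ₁ φ₂, fun j => X₁.piecewise_cases φ₁ φ₂ (fun t => t = 0 ∨ t = 1) (hφ₁ j) (hφ₂ j),
      funext fun i => ?_, (sum_mul_piecewise_eq_add_compl X₁ c φ₁ φ₂).symm⟩
    rw [Matrix.mulVec, dotProduct, sum_mul_piecewise_eq_add_compl, hrow i]
    ring

open Finset in
theorem two_table_optimization {m n : ℕ} (A : Matrix (Fin m) (Fin n) ℝ)
    (b : Fin m → ℝ) (c : Fin n → ℝ) (X₁ X₂ : Finset (Fin n))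
    (hunion : X₁ ∪ X₂ = Finset.univ) (hdisj : Disjoint X₁ X₂)
    (hfeas : ∃ x : Fin n → ℝ, (∀ j, x j = 0 ∨ x j = 1) ∧ A.mulVec x = b) :
    sInf {y : ℝ | ∃ x : Fin n → ℝ, (∀ j, x j = 0 ∨ x j = 1) ∧ A.mulVec x = b ∧
        y = ∑ j, c j * x j} =
    sInf {y : ℝ | ∃ φ₁ φ₂ : Fin n → ℝ,
        (∀ j, φ₁ j = 0 ∨ φ₁ j = 1) ∧ (∀ j, φ₂ j = 0 ∨ φ₂ j = 1) ∧
        (∀ i, ∑ j ∈ X₁, A i j * φ₁ j = b i - ∑ j ∈ X₂, A i j * φ₂ j) ∧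
        y = (∑ j ∈ X₁, c j * φ₁ j) + ∑ j ∈ X₂, c j * φ₂ j} :=
  two_table_optimization_general A b c X₁ X₂ hunion hdisj
end

section
/- Let A be a real m×n matrix, b ∈ ℝ^m, with n divisible by 4. Partition {1,...,n} into X₁, X₂, X₃, X₄ of equal size. For assignments φ_p on X_p define u_i = Σ_{j∈X₁} A_{ij}φ₁(j), v_i = Σ_{j∈X₂} A_{ij}φ₂(j), s_i = −Σ_{j∈X₃} A_{ij}φ₃(j), t_i = b_i − Σ_{j∈X₄} A_{ij}φ₄(j). Then there exists x ∈ {0,1}^n with Ax = b if and only if there exist assignments φ₁, φ₂, φ₃, φ₄ such that u + v = s + t in ℝ^m. -/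
/-! A 0/1 solution `x` of `A x = b` yields four assignments by restricting `x` to the four blocks,
and conversely four assignments satisfying `u + v = s + t` glue, block by block, into a 0/1
vector `x`; in both directions `A x = b` is `u + v = s + t` after splitting the row sums of `A x`
along the partition. -/

open Finset

section Partition

variable {ι : Type*} {X₁ X₂ X₃ X₄ : Finset ι}

theorem Finset.sum_eq_sum_add_sum_add_sum_add_sum {M : Type*} [AddCommMonoid M] [Fintype ι]
    [DecidableEq ι] (hunion : X₁ ∪ X₂ ∪ X₃ ∪ X₄ = univ) (h12 : Disjoint X₁ X₂)
    (h13 : Disjoint X₁ X₃) (h14 : Disjoint X₁ X₄) (h23 : Disjoint X₂ X₃) (h24 : Disjoint X₂ X₄)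
    (h34 : Disjoint X₃ X₄) (f : ι → M) :
    ∑ j, f j = (∑ j ∈ X₁, f j) + (∑ j ∈ X₂, f j) + (∑ j ∈ X₃, f j) + (∑ j ∈ X₄, f j) := by
  rw [← hunion, sum_union, sum_union, sum_union h12]
  · exact disjoint_union_left.mpr ⟨h13, h23⟩
  · exact disjoint_union_left.mpr ⟨disjoint_union_left.mpr ⟨h14, h24⟩, h34⟩

theorem Matrix.mulVec_apply_eq_sum_add_sum_add_sum_add_sum {m R : Type*} [Fintype ι]
    [DecidableEq ι] [NonUnitalNonAssocSemiring R] (hunion : X₁ ∪ X₂ ∪ X₃ ∪ X₄ = univ)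
    (h12 : Disjoint X₁ X₂) (h13 : Disjoint X₁ X₃) (h14 : Disjoint X₁ X₄) (h23 : Disjoint X₂ X₃)
    (h24 : Disjoint X₂ X₄) (h34 : Disjoint X₃ X₄) (A : Matrix m ι R) (x : ι → R) (i : m) :
    A.mulVec x i = (∑ j ∈ X₁, A i j * x j) + (∑ j ∈ X₂, A i j * x j) +
      (∑ j ∈ X₃, A i j * x j) + (∑ j ∈ X₄, A i j * x j) :=
  sum_eq_sum_add_sum_add_sum_add_sum hunion h12 h13 h14 h23 h24 h34 _

variable [DecidableEq ι] {α : Type*}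

def piecewise₄ (X₁ X₂ X₃ : Finset ι) (φ₁ φ₂ φ₃ φ₄ : ι → α) : ι → α :=
  X₁.piecewise φ₁ (X₂.piecewise φ₂ (X₃.piecewise φ₃ φ₄))

variable {φ₁ φ₂ φ₃ φ₄ : ι → α}

theorem piecewise₄_cases (P : α → Prop) (h₁ : ∀ j, P (φ₁ j)) (h₂ : ∀ j, P (φ₂ j))
    (h₃ : ∀ j, P (φ₃ j)) (h₄ : ∀ j, P (φ₄ j)) (j : ι) :
    P (piecewise₄ X₁ X₂ X₃ φ₁ φ₂ φ₃ φ₄ j) :=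
  piecewise_cases X₁ φ₁ _ P (h₁ j) <| piecewise_cases X₂ φ₂ _ P (h₂ j) <|
    piecewise_cases X₃ φ₃ φ₄ P (h₃ j) (h₄ j)

theorem eqOn_piecewise₄_first : Set.EqOn (piecewise₄ X₁ X₂ X₃ φ₁ φ₂ φ₃ φ₄) φ₁ X₁ :=
  fun _ hj => piecewise_eq_of_mem _ _ _ hj

theorem eqOn_piecewise₄_second (h12 : Disjoint X₁ X₂) :
    Set.EqOn (piecewise₄ X₁ X₂ X₃ φ₁ φ₂ φ₃ φ₄) φ₂ X₂ := fun j hj => by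
  simp [piecewise₄, disjoint_right.mp h12 hj, piecewise_eq_of_mem _ _ _ (mem_coe.mp hj)]

theorem eqOn_piecewise₄_third (h13 : Disjoint X₁ X₃) (h23 : Disjoint X₂ X₃) :
    Set.EqOn (piecewise₄ X₁ X₂ X₃ φ₁ φ₂ φ₃ φ₄) φ₃ X₃ := fun j hj => by
  simp [piecewise₄, disjoint_right.mp h13 hj, disjoint_right.mp h23 hj,
    piecewise_eq_of_mem _ _ _ (mem_coe.mp hj)]

theorem eqOn_piecewise₄_fourth (h14 : Disjoint X₁ X₄) (h24 : Disjoint X₂ X₄)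
    (h34 : Disjoint X₃ X₄) : Set.EqOn (piecewise₄ X₁ X₂ X₃ φ₁ φ₂ φ₃ φ₄) φ₄ X₄ := fun j hj => by
  simp [piecewise₄, disjoint_right.mp h14 hj, disjoint_right.mp h24 hj,
    disjoint_right.mp h34 hj]

end Partition

theorem Finset.sum_mul_congr_of_eqOn {ι R : Type*} [Mul R] [AddCommMonoid R] {X : Finset ι}
    {x φ : ι → R} (h : Set.EqOn x φ X) (f : ι → R) :
    ∑ j ∈ X, f j * x j = ∑ j ∈ X, f j * φ j :=
  sum_congr rfl fun _ hj => congrArg _ (h hj)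

open Finset in
theorem four_table_feasibility_general {m n : ℕ} (A : Matrix (Fin m) (Fin n) ℝ) (b : Fin m → ℝ)
    (X₁ X₂ X₃ X₄ : Finset (Fin n))
    (hunion : X₁ ∪ X₂ ∪ X₃ ∪ X₄ = Finset.univ)
    (h12 : Disjoint X₁ X₂) (h13 : Disjoint X₁ X₃) (h14 : Disjoint X₁ X₄)
    (h23 : Disjoint X₂ X₃) (h24 : Disjoint X₂ X₄) (h34 : Disjoint X₃ X₄) :
    (∃ x : Fin n → ℝ, (∀ j, x j = 0 ∨ x j = 1) ∧ A.mulVec x = b) ↔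
    (∃ φ₁ φ₂ φ₃ φ₄ : Fin n → ℝ,
      (∀ j, φ₁ j = 0 ∨ φ₁ j = 1) ∧ (∀ j, φ₂ j = 0 ∨ φ₂ j = 1) ∧
      (∀ j, φ₃ j = 0 ∨ φ₃ j = 1) ∧ (∀ j, φ₄ j = 0 ∨ φ₄ j = 1) ∧
      ∀ i, (∑ j ∈ X₁, A i j * φ₁ j) + (∑ j ∈ X₂, A i j * φ₂ j) =
        (- ∑ j ∈ X₃, A i j * φ₃ j) + (b i - ∑ j ∈ X₄, A i j * φ₄ j)) := by
  have hsplit :=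
    Matrix.mulVec_apply_eq_sum_add_sum_add_sum_add_sum hunion h12 h13 h14 h23 h24 h34 A
  constructor
  · rintro ⟨x, hx, hAx⟩
    refine ⟨x, x, x, x, hx, hx, hx, hx, fun i => ?_⟩
    linarith [hsplit x i, congrFun hAx i]
  · rintro ⟨φ₁, φ₂, φ₃, φ₄, h₁, h₂, h₃, h₄, heq⟩
    set x := piecewise₄ X₁ X₂ X₃ φ₁ φ₂ φ₃ φ₄
    refine ⟨x, piecewise₄_cases (fun r => r = 0 ∨ r = 1) h₁ h₂ h₃ h₄, funext fun i => ?_⟩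
    rw [hsplit x i, sum_mul_congr_of_eqOn eqOn_piecewise₄_first,
      sum_mul_congr_of_eqOn (eqOn_piecewise₄_second h12),
      sum_mul_congr_of_eqOn (eqOn_piecewise₄_third h13 h23),
      sum_mul_congr_of_eqOn (eqOn_piecewise₄_fourth h14 h24 h34)]
    linarith [heq i]

open Finset in
theorem four_table_feasibility {m n : ℕ} (A : Matrix (Fin m) (Fin n) ℝ) (b : Fin m → ℝ)
    (hn : 4 ∣ n) (X₁ X₂ X₃ X₄ : Finset (Fin n))
    (hunion : X₁ ∪ X₂ ∪ X₃ ∪ X₄ = Finset.univ)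
    (h12 : Disjoint X₁ X₂) (h13 : Disjoint X₁ X₃) (h14 : Disjoint X₁ X₄)
    (h23 : Disjoint X₂ X₃) (h24 : Disjoint X₂ X₄) (h34 : Disjoint X₃ X₄)
    (hc₁ : X₁.card = n / 4) (hc₂ : X₂.card = n / 4)
    (hc₃ : X₃.card = n / 4) (hc₄ : X₄.card = n / 4) :
    (∃ x : Fin n → ℝ, (∀ j, x j = 0 ∨ x j = 1) ∧ A.mulVec x = b) ↔
    (∃ φ₁ φ₂ φ₃ φ₄ : Fin n → ℝ,
      (∀ j, φ₁ j = 0 ∨ φ₁ j = 1) ∧ (∀ j, φ₂ j = 0 ∨ φ₂ j = 1) ∧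
      (∀ j, φ₃ j = 0 ∨ φ₃ j = 1) ∧ (∀ j, φ₄ j = 0 ∨ φ₄ j = 1) ∧
      ∀ i, (∑ j ∈ X₁, A i j * φ₁ j) + (∑ j ∈ X₂, A i j * φ₂ j) =
        (- ∑ j ∈ X₃, A i j * φ₃ j) + (b i - ∑ j ∈ X₄, A i j * φ₄ j)) :=
  four_table_feasibility_general A b X₁ X₂ X₃ X₄ hunion h12 h13 h14 h23 h24 h34
end
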